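/- Define the CQT-norm of $A=T(a)+E$ with $a\in\mathcal W_1$, $E\in\mathcal F$ by $\|A\|_{\mathcal{CQT}}=\|a\|_{\mathcal W}+\|a'\|_{\mathcal W}+\|E\|_{\mathcal F}$. Then for any two CQT matrices $A=T(a)+E_a$ and $B=T(b)+E_b$, the product $AB$ is a CQT matrix with symbol $ab$ and $\|AB\|_{\mathcal{CQT}}\le \|A\|_{\mathcal{CQT}}\,\|B\|_{\mathcal{CQT}}$. -/

import Mathlib

noncomputable section

def FNorm (F : ℕ → ℕ → ℂ) : ℝ := ∑' p : ℕ × ℕ, ‖F p.1 p.2‖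

def MemF (F : ℕ → ℕ → ℂ) : Prop := Summable fun p : ℕ × ℕ => ‖F p.1 p.2‖

def matMul (E F : ℕ → ℕ → ℂ) : ℕ → ℕ → ℂ := fun i j => ∑' r : ℕ, E i r * F r j

def Toep (a : ℤ → ℂ) : ℕ → ℕ → ℂ := fun i j => a ((j : ℤ) - (i : ℤ))

/-- `‖a‖_{𝒲₁} = ‖a‖_W + ‖a'‖_W`. -/
def W1Norm (a : ℤ → ℂ) : ℝ :=
  (∑' k : ℤ, ‖a k‖) + ∑' k : ℤ, |(k : ℝ)| * ‖a k‖

/-!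
Put `c = a * b`. Summing `r ∈ ℤ` instead of `r ∈ ℕ` in `(T(a) T(b))ᵢⱼ = ∑ᵣ a_{r-i} b_{j-r}` gives
`c_{j-i}`, so `T(a) T(b) = T(c) - H(a⁻) H(b⁺)` with the Hankel matrices `H(a⁻) = (a_{-i-j-1})` and
`H(b⁺) = (b_{i+j+1})`. The value `a_{-s-1}` occurs `s + 1` times in `H(a⁻)`, so
`‖H(a⁻)‖_𝓕 ≤ ‖a'‖_W`, and likewise `‖H(b⁺)‖_𝓕 ≤ ‖b'‖_W`. Hence `AB = T(c) + E_c` with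
`E_c = T(a) E_b + E_a T(b) + E_a E_b - H(a⁻) H(b⁺)`, and each product is controlled by
`∑_{i,j,r} |X_{ir}| |Y_{rj}| = ∑_r (∑_i |X_{ir}|) (∑_j |Y_{rj}|)`, bounded through the column sums
of `X` or the row sums of `Y`. With `‖c‖_W ≤ ‖a‖_W ‖b‖_W` and, from `|k| ≤ |m| + |k - m|`,
`‖c'‖_W ≤ ‖a'‖_W ‖b‖_W + ‖a‖_W ‖b'‖_W`, all the bounds together are dominated by the expanded
product `(‖a‖_W + ‖a'‖_W + ‖E_a‖_𝓕) (‖b‖_W + ‖b'‖_W + ‖E_b‖_𝓕)`.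
-/

open Function

lemma summable_and_tsum_le_of_le_of_hasSum {ι : Type*} {f g : ι → ℝ} {s : ℝ} (hf : 0 ≤ f)
    (hfg : f ≤ g) (hg : HasSum g s) : Summable f ∧ ∑' i, f i ≤ s := by
  have hs := hg.summable.of_nonneg_of_le hf hfg
  exact ⟨hs, (hs.tsum_le_tsum hfg hg.summable).trans_eq hg.tsum_eq⟩

section SpaceF

variable {X Y : ℕ → ℕ → ℂ}

lemma fNorm_nonneg (X : ℕ → ℕ → ℂ) : 0 ≤ FNorm X := tsum_nonneg fun _ => norm_nonneg _

lemma MemF.summable_row (hX : MemF X) (i : ℕ) : Summable fun j => ‖X i j‖ :=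
  hX.prod_factor i

lemma MemF.summable_col (hX : MemF X) (j : ℕ) : Summable fun i => ‖X i j‖ :=
  hX.prod_symm.prod_factor j

lemma MemF.tsum_tsum_row (hX : MemF X) : ∑' i, ∑' j, ‖X i j‖ = FNorm X :=
  (hX.tsum_prod' hX.summable_row).symm

lemma MemF.tsum_tsum_col (hX : MemF X) : ∑' j, ∑' i, ‖X i j‖ = FNorm X := by
  have hX' : Summable (uncurry fun i j => ‖X i j‖) := hX
  rw [hX'.tsum_comm' hX.summable_row hX.summable_col, hX.tsum_tsum_row]

lemma MemF.tsum_col_le (hX : MemF X) (j : ℕ) : ∑' i, ‖X i j‖ ≤ FNorm X :=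
  tsum_comp_le_tsum_of_inj hX (fun _ => norm_nonneg _) (i := fun i => (i, j))
    fun _ _ h => (Prod.ext_iff.1 h).1

lemma MemF.add (hX : MemF X) (hY : MemF Y) : MemF fun i j => X i j + Y i j :=
  (Summable.add hX hY).of_nonneg_of_le (fun _ => norm_nonneg _) fun _ => norm_add_le _ _

lemma MemF.sub (hX : MemF X) (hY : MemF Y) : MemF fun i j => X i j - Y i j :=
  (Summable.add hX hY).of_nonneg_of_le (fun _ => norm_nonneg _) fun _ => norm_sub_le _ _

lemma fNorm_add_le (hX : MemF X) (hY : MemF Y) :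
    FNorm (fun i j => X i j + Y i j) ≤ FNorm X + FNorm Y := by
  rw [FNorm, FNorm, FNorm, ← Summable.tsum_add hX hY]
  exact Summable.tsum_le_tsum (fun _ => norm_add_le _ _) (hX.add hY) (Summable.add hX hY)

lemma fNorm_sub_le (hX : MemF X) (hY : MemF Y) :
    FNorm (fun i j => X i j - Y i j) ≤ FNorm X + FNorm Y := by
  rw [FNorm, FNorm, FNorm, ← Summable.tsum_add hX hY]
  exact Summable.tsum_le_tsum (fun _ => norm_sub_le _ _) (hX.sub hY) (Summable.add hX hY)

end SpaceF

section MulKernel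

variable {X Y : ℕ → ℕ → ℂ}

def mulKernel (X Y : ℕ → ℕ → ℂ) (q : (ℕ × ℕ) × ℕ) : ℝ := ‖X q.1.1 q.2‖ * ‖Y q.2 q.1.2‖

lemma hasSum_mulKernel (hX : ∀ r, Summable fun i => ‖X i r‖)
    (hY : ∀ r, Summable fun j => ‖Y r j‖)
    (h : Summable fun r => (∑' i, ‖X i r‖) * ∑' j, ‖Y r j‖) :
    HasSum (mulKernel X Y) (∑' r, (∑' i, ‖X i r‖) * ∑' j, ‖Y r j‖) := by
  let e : (ℕ × ℕ) × ℕ ≃ ℕ × (ℕ × ℕ) := (Equiv.prodComm _ _)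
  have hfib : ∀ r, HasSum (fun p : ℕ × ℕ => ‖X p.1 r‖ * ‖Y r p.2‖)
      ((∑' i, ‖X i r‖) * ∑' j, ‖Y r j‖) := fun r => by
    have hs := (hX r).mul_of_nonneg (hY r) (fun _ => norm_nonneg _) fun _ => norm_nonneg _
    rw [(hX r).tsum_mul_tsum (hY r) hs]
    exact hs.hasSum
  have hsum : Summable fun q : ℕ × (ℕ × ℕ) => ‖X q.2.1 q.1‖ * ‖Y q.1 q.2.2‖ :=
    (summable_prod_of_nonneg fun _ => by positivity).2
      ⟨fun r => (hfib r).summable, h.congr fun r => (hfib r).tsum_eq.symm⟩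
  have H := hsum.hasSum
  rw [hsum.tsum_prod' fun r => (hfib r).summable, tsum_congr fun r => (hfib r).tsum_eq] at H
  exact e.symm.hasSum_iff.1 H

lemma summable_mulKernel_and_tsum_le_of_col {C : ℝ} (hX : ∀ r, Summable fun i => ‖X i r‖)
    (hC : ∀ r, ∑' i, ‖X i r‖ ≤ C) (hY : MemF Y) :
    Summable (mulKernel X Y) ∧ ∑' q, mulKernel X Y q ≤ C * FNorm Y := by
  have hle : ∀ r, (∑' i, ‖X i r‖) * ∑' j, ‖Y r j‖ ≤ C * ∑' j, ‖Y r j‖ :=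
    fun r => mul_le_mul_of_nonneg_right (hC r) (by positivity)
  have hmaj : Summable fun r => C * ∑' j, ‖Y r j‖ := (Summable.prod hY).mul_left C
  have hs : Summable fun r => (∑' i, ‖X i r‖) * ∑' j, ‖Y r j‖ :=
    hmaj.of_nonneg_of_le (fun _ => by positivity) hle
  have H := hasSum_mulKernel hX hY.summable_row hs
  refine ⟨H.summable, ?_⟩
  rw [H.tsum_eq, ← hY.tsum_tsum_row, ← tsum_mul_left]
  exact hs.tsum_le_tsum hle hmaj

lemma summable_mulKernel_and_tsum_le_of_row {C : ℝ} (hX : MemF X)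
    (hY : ∀ r, Summable fun j => ‖Y r j‖) (hC : ∀ r, ∑' j, ‖Y r j‖ ≤ C) :
    Summable (mulKernel X Y) ∧ ∑' q, mulKernel X Y q ≤ FNorm X * C := by
  have hle : ∀ r, (∑' i, ‖X i r‖) * ∑' j, ‖Y r j‖ ≤ (∑' i, ‖X i r‖) * C :=
    fun r => mul_le_mul_of_nonneg_left (hC r) (by positivity)
  have hmaj : Summable fun r => (∑' i, ‖X i r‖) * C :=
    (Summable.prod (Summable.prod_symm hX)).mul_right C
  have hs : Summable fun r => (∑' i, ‖X i r‖) * ∑' j, ‖Y r j‖ :=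
    hmaj.of_nonneg_of_le (fun _ => by positivity) hle
  have H := hasSum_mulKernel hX.summable_col hY hs
  refine ⟨H.summable, ?_⟩
  rw [H.tsum_eq, ← hX.tsum_tsum_col, ← tsum_mul_right]
  exact hs.tsum_le_tsum hle hmaj

lemma summable_mulKernel_and_tsum_le_of_memF (hX : MemF X) (hY : MemF Y) :
    Summable (mulKernel X Y) ∧ ∑' q, mulKernel X Y q ≤ FNorm X * FNorm Y :=
  summable_mulKernel_and_tsum_le_of_col hX.summable_col hX.tsum_col_le hY

lemma summable_mul_of_summable_mulKernel (hXY : Summable (mulKernel X Y)) (i j : ℕ) :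
    Summable fun r => X i r * Y r j :=
  Summable.of_norm <| (hXY.prod_factor (i, j)).congr fun _ => (norm_mul _ _).symm

lemma norm_matMul_le (hXY : Summable (mulKernel X Y)) (i j : ℕ) :
    ‖matMul X Y i j‖ ≤ ∑' r, mulKernel X Y ((i, j), r) :=
  (norm_tsum_le_tsum_norm (summable_mul_of_summable_mulKernel hXY i j).norm).trans_eq
    (tsum_congr fun _ => norm_mul _ _)

lemma memF_matMul (hXY : Summable (mulKernel X Y)) : MemF (matMul X Y) :=
  hXY.prod.of_nonneg_of_le (fun _ => norm_nonneg _) fun p => norm_matMul_le hXY p.1 p.2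

lemma fNorm_matMul_le (hXY : Summable (mulKernel X Y)) :
    FNorm (matMul X Y) ≤ ∑' q, mulKernel X Y q := by
  rw [hXY.tsum_prod' fun p => hXY.prod_factor p]
  exact (memF_matMul hXY).tsum_le_tsum (fun p => norm_matMul_le hXY p.1 p.2) hXY.prod

lemma matMul_add_add {X' Y' : ℕ → ℕ → ℂ} {i j : ℕ} (h₁ : Summable fun r => X i r * Y r j)
    (h₂ : Summable fun r => X i r * Y' r j) (h₃ : Summable fun r => X' i r * Y r j)
    (h₄ : Summable fun r => X' i r * Y' r j) :
    matMul (fun i j => X i j + X' i j) (fun i j => Y i j + Y' i j) i j =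
      matMul X Y i j + matMul X Y' i j + matMul X' Y i j + matMul X' Y' i j := by
  simp only [matMul, add_mul, mul_add]
  rw [(h₁.add h₃).tsum_add (h₂.add h₄), h₁.tsum_add h₃, h₂.tsum_add h₄]
  ring

end MulKernel

lemma summable_norm_toep_col {a : ℤ → ℂ} (ha : Summable fun k => ‖a k‖) (r : ℕ) :
    Summable fun i => ‖Toep a i r‖ :=
  ha.comp_injective (i := fun i : ℕ => (r : ℤ) - i) fun _ _ h => by simpa using h

lemma tsum_norm_toep_col_le {a : ℤ → ℂ} (ha : Summable fun k => ‖a k‖) (r : ℕ) :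
    ∑' i, ‖Toep a i r‖ ≤ ∑' k, ‖a k‖ :=
  tsum_comp_le_tsum_of_inj ha (fun _ => norm_nonneg _) (i := fun i : ℕ => (r : ℤ) - i)
    fun _ _ h => by simpa using h

lemma summable_norm_toep_row {b : ℤ → ℂ} (hb : Summable fun k => ‖b k‖) (r : ℕ) :
    Summable fun j => ‖Toep b r j‖ :=
  hb.comp_injective (i := fun j : ℕ => (j : ℤ) - r) fun _ _ h => by simpa using h

lemma tsum_norm_toep_row_le {b : ℤ → ℂ} (hb : Summable fun k => ‖b k‖) (r : ℕ) :
    ∑' j, ‖Toep b r j‖ ≤ ∑' k, ‖b k‖ :=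
  tsum_comp_le_tsum_of_inj hb (fun _ => norm_nonneg _) (i := fun j : ℕ => (j : ℤ) - r)
    fun _ _ h => by simpa using h

def hankel (g : ℕ → ℂ) : ℕ → ℕ → ℂ := fun i j => g (i + j)

open Finset.HasAntidiagonal in
lemma hasSum_norm_hankel {g : ℕ → ℂ} (hg : Summable fun s : ℕ => ((s : ℝ) + 1) * ‖g s‖) :
    HasSum (fun p : ℕ × ℕ => ‖hankel g p.1 p.2‖) (∑' s : ℕ, ((s : ℝ) + 1) * ‖g s‖) := by
  have hfib (s : ℕ) : HasSum (fun x : antidiagonal s => ‖hankel g x.1.1 x.1.2‖)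
      (((s : ℝ) + 1) * ‖g s‖) := by
    have hx (x : antidiagonal s) : ‖hankel g x.1.1 x.1.2‖ = ‖g s‖ := by
      rw [hankel, mem_antidiagonal.1 x.2]
    simp only [hx]
    convert hasSum_fintype fun _ : antidiagonal s => ‖g s‖
    simp
  rw [← (sigmaAntidiagonalEquivProd (A := ℕ)).hasSum_iff]
  exact hg.hasSum.sigma_of_hasSum hfib <| (summable_sigma_of_nonneg fun _ => norm_nonneg _).2
    ⟨fun s => (hfib s).summable, hg.congr fun s => (hfib s).tsum_eq.symm⟩

lemma memF_hankel_comp_and_fNorm_le {a : ℤ → ℂ} (ha1 : Summable fun k : ℤ => |(k : ℝ)| * ‖a k‖)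
    {e : ℕ → ℤ} (he : Injective e) (habs : ∀ s, |(e s : ℝ)| = s + 1) :
    MemF (hankel (a ∘ e)) ∧ FNorm (hankel (a ∘ e)) ≤ ∑' k : ℤ, |(k : ℝ)| * ‖a k‖ := by
  have hw : ∀ s : ℕ, |(e s : ℝ)| * ‖a (e s)‖ = ((s : ℝ) + 1) * ‖(a ∘ e) s‖ := fun s => by
    rw [habs, comp_apply]
  have H := hasSum_norm_hankel ((ha1.comp_injective he).congr hw)
  refine ⟨H.summable, ?_⟩
  rw [FNorm, H.tsum_eq, ← tsum_congr hw]
  exact tsum_comp_le_tsum_of_inj ha1 (fun _ => by positivity) he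

section Convolution

lemma hasSum_conv_kernel {G : Type*} [AddCommGroup G] {f g : G → ℝ} (hf0 : 0 ≤ f) (hg0 : 0 ≤ g)
    (hf : Summable f) (hg : Summable g) :
    HasSum (fun q : G × G => f q.2 * g (q.1 - q.2)) ((∑' m, f m) * ∑' n, g n) := by
  let e : G × G ≃ G × G :=
    (Equiv.prodShear (Equiv.refl G) fun m => Equiv.addLeft m).trans (Equiv.prodComm G G)
  have hfg := hf.mul_of_nonneg hg hf0 hg0
  rw [← e.hasSum_iff, hf.tsum_mul_tsum hg hfg]
  convert hfg.hasSum using 2 with p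
  simp [e]

def conv (a b : ℤ → ℂ) (k : ℤ) : ℂ := ∑' m, a m * b (k - m)

lemma conv_sub (a b : ℤ → ℂ) (i j : ℤ) : conv a b (j - i) = ∑' r, a (r - i) * b (j - r) := by
  rw [conv, ← (Equiv.subRight i).tsum_eq]
  simp [sub_sub_sub_cancel_right]

variable {a b : ℤ → ℂ}

lemma summable_conv_terms (ha : Summable fun k => ‖a k‖) (hb : Summable fun k => ‖b k‖)
    (i j : ℤ) : Summable fun r => a (r - i) * b (j - r) := by
  have H := (hasSum_conv_kernel (fun _ => norm_nonneg _) (fun _ => norm_nonneg _) ha hb).summable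
  refine Summable.of_norm ?_
  rw [← (Equiv.addRight i).summable_iff]
  refine (H.prod_factor (j - i)).congr fun m => ?_
  simp only [comp_apply, Equiv.coe_addRight, add_sub_cancel_right, sub_add_eq_sub_sub_swap,
    norm_mul]

lemma toep_conv_eq_matMul_toep_add_matMul_hankel (ha : Summable fun k => ‖a k‖)
    (hb : Summable fun k => ‖b k‖) (i j : ℕ) :
    Toep (conv a b) i j = matMul (Toep a) (Toep b) i j +
      matMul (hankel fun s => a (-(s : ℤ) - 1)) (hankel fun s => b ((s : ℤ) + 1)) i j := by
  have h := summable_conv_terms ha hb i j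
  have hneg : Injective fun n : ℕ => -((n : ℤ) + 1) := fun _ _ h => by simpa using h
  rw [Toep, conv_sub, tsum_of_nat_of_neg_add_one (f := fun r : ℤ => a (r - i) * b (j - r))
    (h.comp_injective Nat.cast_injective) (h.comp_injective hneg)]
  unfold matMul Toep hankel
  refine congrArg₂ (· + ·) rfl (tsum_congr fun n => ?_)
  push_cast
  ring_nf

lemma norm_conv_le {k : ℤ} (h : Summable fun m => ‖a m‖ * ‖b (k - m)‖) :
    ‖conv a b k‖ ≤ ∑' m, ‖a m‖ * ‖b (k - m)‖ := by
  simp only [conv, ← norm_mul] at h ⊢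
  exact norm_tsum_le_tsum_norm h

lemma summable_norm_conv_and_tsum_le (ha : Summable fun k => ‖a k‖)
    (hb : Summable fun k => ‖b k‖) :
    Summable (fun k => ‖conv a b k‖) ∧ ∑' k, ‖conv a b k‖ ≤ (∑' k, ‖a k‖) * ∑' k, ‖b k‖ := by
  have H := hasSum_conv_kernel (fun _ => norm_nonneg _) (fun _ => norm_nonneg _) ha hb
  exact summable_and_tsum_le_of_le_of_hasSum (fun _ => norm_nonneg _)
    (fun k => norm_conv_le (H.summable.prod_factor k))
    (H.prod_fiberwise fun k => (H.summable.prod_factor k).hasSum)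

lemma summable_weighted_norm_conv_and_tsum_le (ha : Summable fun k => ‖a k‖)
    (ha1 : Summable fun k : ℤ => |(k : ℝ)| * ‖a k‖) (hb : Summable fun k => ‖b k‖)
    (hb1 : Summable fun k : ℤ => |(k : ℝ)| * ‖b k‖) :
    Summable (fun k : ℤ => |(k : ℝ)| * ‖conv a b k‖) ∧
      ∑' k : ℤ, |(k : ℝ)| * ‖conv a b k‖ ≤
        (∑' k : ℤ, |(k : ℝ)| * ‖a k‖) * (∑' k, ‖b k‖) +
          (∑' k, ‖a k‖) * ∑' k : ℤ, |(k : ℝ)| * ‖b k‖ := by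
  have H0 := hasSum_conv_kernel (fun _ => norm_nonneg _) (fun _ => norm_nonneg _) ha hb
  have H1 := hasSum_conv_kernel (fun _ => by positivity) (fun _ => norm_nonneg _) ha1 hb
  have H2 := hasSum_conv_kernel (fun _ => norm_nonneg _) (fun _ => by positivity) ha hb1
  have hsum := (H1.prod_fiberwise fun k => (H1.summable.prod_factor k).hasSum).add
    (H2.prod_fiberwise fun k => (H2.summable.prod_factor k).hasSum)
  have hle (k : ℤ) : |(k : ℝ)| * ‖conv a b k‖ ≤
      (∑' m : ℤ, |(m : ℝ)| * ‖a m‖ * ‖b (k - m)‖) +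
        ∑' m, ‖a m‖ * (|((k - m : ℤ) : ℝ)| * ‖b (k - m)‖) := by
    have hfib := H0.summable.prod_factor k
    rw [← (H1.summable.prod_factor k).tsum_add (H2.summable.prod_factor k)]
    calc |(k : ℝ)| * ‖conv a b k‖ ≤ |(k : ℝ)| * ∑' m, ‖a m‖ * ‖b (k - m)‖ :=
          mul_le_mul_of_nonneg_left (norm_conv_le hfib) (abs_nonneg _)
      _ = ∑' m, |(k : ℝ)| * (‖a m‖ * ‖b (k - m)‖) := tsum_mul_left.symm
      _ ≤ _ := by
        refine (hfib.mul_left _).tsum_le_tsum (fun m => ?_)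
          ((H1.summable.prod_factor k).add (H2.summable.prod_factor k))
        have htri : |(k : ℝ)| ≤ |(m : ℝ)| + |((k - m : ℤ) : ℝ)| := by
          simpa using abs_add_le (m : ℝ) ((k : ℝ) - m)
        nlinarith [mul_nonneg (norm_nonneg (a m)) (norm_nonneg (b (k - m)))]
  exact summable_and_tsum_le_of_le_of_hasSum (fun _ => by positivity) hle hsum

end Convolution

lemma exists_matMul_cqt_eq_toep_conv_add {a b : ℤ → ℂ} {Ea Eb : ℕ → ℕ → ℂ}
    (ha : Summable fun k => ‖a k‖) (ha1 : Summable fun k : ℤ => |(k : ℝ)| * ‖a k‖)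
    (hb : Summable fun k => ‖b k‖) (hb1 : Summable fun k : ℤ => |(k : ℝ)| * ‖b k‖)
    (hEa : MemF Ea) (hEb : MemF Eb) :
    ∃ Ec : ℕ → ℕ → ℂ, MemF Ec ∧
      (∀ i j, matMul (fun i j => Toep a i j + Ea i j) (fun i j => Toep b i j + Eb i j) i j
        = Toep (conv a b) i j + Ec i j) ∧
      FNorm Ec ≤ (∑' k : ℤ, |(k : ℝ)| * ‖a k‖) * (∑' k : ℤ, |(k : ℝ)| * ‖b k‖) +
        (∑' k, ‖a k‖) * FNorm Eb + FNorm Ea * (∑' k, ‖b k‖) + FNorm Ea * FNorm Eb := by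
  set Ha := hankel fun s => a (-(s : ℤ) - 1)
  set Hb := hankel fun s => b ((s : ℤ) + 1)
  obtain ⟨hHa, hHa_le⟩ : MemF Ha ∧ FNorm Ha ≤ _ :=
    memF_hankel_comp_and_fNorm_le ha1 (e := fun s : ℕ => -(s : ℤ) - 1)
      (fun _ _ h => by simpa using h) fun s => by
        rw [show ((-(s : ℤ) - 1 : ℤ) : ℝ) = -((s : ℝ) + 1) by push_cast; ring, abs_neg,
          abs_of_nonneg (by positivity)]
  obtain ⟨hHb, hHb_le⟩ : MemF Hb ∧ FNorm Hb ≤ _ :=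
    memF_hankel_comp_and_fNorm_le hb1 (e := fun s : ℕ => (s : ℤ) + 1)
      (fun _ _ h => by simpa using h) fun s => by push_cast; exact abs_of_nonneg (by positivity)
  obtain ⟨hK₁, hK₁_le⟩ := summable_mulKernel_and_tsum_le_of_col (summable_norm_toep_col ha)
    (tsum_norm_toep_col_le ha) hEb
  obtain ⟨hK₂, hK₂_le⟩ := summable_mulKernel_and_tsum_le_of_row hEa (summable_norm_toep_row hb)
    (tsum_norm_toep_row_le hb)
  obtain ⟨hK₃, hK₃_le⟩ := summable_mulKernel_and_tsum_le_of_memF hEa hEb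
  obtain ⟨hK₄, hK₄_le⟩ := summable_mulKernel_and_tsum_le_of_memF hHa hHb
  have hM₁ := memF_matMul hK₁
  have hM₂ := memF_matMul hK₂
  have hM₃ := memF_matMul hK₃
  refine ⟨fun i j => matMul (Toep a) Eb i j + matMul Ea (Toep b) i j + matMul Ea Eb i j -
    matMul Ha Hb i j, ((hM₁.add hM₂).add hM₃).sub (memF_matMul hK₄), fun i j => ?_, ?_⟩
  · have hTT : Summable fun r : ℕ => Toep a i r * Toep b r j :=
      (summable_conv_terms ha hb i j).comp_injective Nat.cast_injective
    rw [matMul_add_add hTT (summable_mul_of_summable_mulKernel hK₁ i j)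
      (summable_mul_of_summable_mulKernel hK₂ i j) (summable_mul_of_summable_mulKernel hK₃ i j),
      toep_conv_eq_matMul_toep_add_matMul_hankel ha hb]
    ring
  · have hD : FNorm (matMul Ha Hb) ≤ _ :=
      (fNorm_matMul_le hK₄).trans <| hK₄_le.trans <|
        mul_le_mul hHa_le hHb_le (fNorm_nonneg _) (by positivity)
    linarith [fNorm_sub_le ((hM₁.add hM₂).add hM₃) (memF_matMul hK₄),
      fNorm_add_le (hM₁.add hM₂) hM₃, fNorm_add_le hM₁ hM₂,
      fNorm_matMul_le hK₁, fNorm_matMul_le hK₂, fNorm_matMul_le hK₃]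

/-- Sub-multiplicativity of the CQT-norm `‖T(a)+E‖ = ‖a‖_W + ‖a'‖_W + ‖E‖_𝓕`:
the product of two CQT matrices is a CQT matrix with symbol `ab` and
`‖AB‖_CQT ≤ ‖A‖_CQT ‖B‖_CQT`. -/
theorem stmt14 (a b : ℤ → ℂ) (Ea Eb : ℕ → ℕ → ℂ)
    (ha : Summable fun k : ℤ => ‖a k‖)
    (ha1 : Summable fun k : ℤ => |(k : ℝ)| * ‖a k‖)
    (hb : Summable fun k : ℤ => ‖b k‖)
    (hb1 : Summable fun k : ℤ => |(k : ℝ)| * ‖b k‖)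
    (hEa : MemF Ea) (hEb : MemF Eb)
    (c : ℤ → ℂ) (hc : ∀ k : ℤ, c k = ∑' m : ℤ, a m * b (k - m)) :
    (Summable fun k : ℤ => ‖c k‖) ∧
    (Summable fun k : ℤ => |(k : ℝ)| * ‖c k‖) ∧
    ∃ Ec : ℕ → ℕ → ℂ, MemF Ec ∧
      (∀ i j, matMul (fun i j => Toep a i j + Ea i j) (fun i j => Toep b i j + Eb i j) i j
        = Toep c i j + Ec i j) ∧
      W1Norm c + FNorm Ec ≤ (W1Norm a + FNorm Ea) * (W1Norm b + FNorm Eb) := by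
  obtain rfl : c = conv a b := funext hc
  obtain ⟨hc₀, hc₀_le⟩ := summable_norm_conv_and_tsum_le ha hb
  obtain ⟨hc₁, hc₁_le⟩ := summable_weighted_norm_conv_and_tsum_le ha ha1 hb hb1
  obtain ⟨Ec, hEc, hAB, hEc_le⟩ := exists_matMul_cqt_eq_toep_conv_add ha ha1 hb hb1 hEa hEb
  refine ⟨hc₀, hc₁, Ec, hEc, hAB, ?_⟩
  have ha1_nonneg : 0 ≤ ∑' k : ℤ, |(k : ℝ)| * ‖a k‖ := by positivity
  have hb1_nonneg : 0 ≤ ∑' k : ℤ, |(k : ℝ)| * ‖b k‖ := by positivity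
  unfold W1Norm
  nlinarith [mul_nonneg ha1_nonneg (fNorm_nonneg Eb), mul_nonneg (fNorm_nonneg Ea) hb1_nonneg]

end
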